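/- Let V : ℝ² → ℝ be continuous, positive, with V(x) → +∞ as |x| → ∞. Fix δ ∈ (0,1), ρ ∈ (0,1], and set ρ_δ := j_{0,1}/√(1−δ). If λ > (ρ_δ/ρ)² and (u,λ) is an eigenpair of H_V = −Δ + V, then for every x ∈ B_V^{(−ρ)}(δλ), the open ball B(x, ρ_δ/√λ) intersects the nodal set N(u) = {p ∈ ℝ² : u(p) = 0}. -/

import Mathlib

open MeasureTheory Real Set Filter

/-- The Euclidean plane. -/
abbrev E2 := EuclideanSpace ℝ (Fin 2)

/-- The Euclidean Laplacian of `u : ℝ² → ℝ`, as the sum of the second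
derivatives in the two coordinate directions. -/
noncomputable def lap (u : E2 → ℝ) (x : E2) : ℝ :=
  ∑ i : Fin 2, iteratedDeriv 2 (fun t : ℝ => u (x + t • EuclideanSpace.single i (1 : ℝ))) 0

/-- Nodal set of `u : ℝ² → ℝ`. -/
def nodalSetE (u : E2 → ℝ) : Set E2 := {p | u p = 0}

/-- A critical zero of `u` : a common zero of `u` and of its differential. -/
def IsCriticalZeroE (u : E2 → ℝ) (p : E2) : Prop :=
  u p = 0 ∧ fderiv ℝ u p = 0

/-- The set of nodal domains of `u`, i.e. of connected components of the
complement of the nodal set. -/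
def nodalDomainsE (u : E2 → ℝ) : Set (Set E2) :=
  {C | ∃ p, u p ≠ 0 ∧ C = connectedComponentIn {q | u q ≠ 0} p}

/-- `u` is an eigenfunction of the isotropic 2D quantum harmonic oscillator
`-Δ + |x|²` with eigenvalue `lam`: nonzero, smooth, square integrable, and
satisfying the eigenvalue equation. -/
def IsHOEigenfunction (u : E2 → ℝ) (lam : ℝ) : Prop :=
  u ≠ 0 ∧ ContDiff ℝ (⊤ : ℕ∞) u ∧ MeasureTheory.MemLp u 2 MeasureTheory.volume ∧
    ∀ x : E2, -lap u x + ‖x‖ ^ 2 * u x = lam * u x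

/-- `(u, lam)` is an eigenpair of `H_V = -Δ + V`: `u` nonzero, `C²`, square
integrable, satisfying the eigenvalue equation. -/
def IsEigenpair (V : E2 → ℝ) (u : E2 → ℝ) (lam : ℝ) : Prop :=
  u ≠ 0 ∧ ContDiff ℝ 2 u ∧ MeasureTheory.MemLp u 2 MeasureTheory.volume ∧
    ∀ x : E2, -lap u x + V x * u x = lam * u x

/-- The classically permitted region `B_V(λ) = {V < λ}`. -/
def BV (V : E2 → ℝ) (lam : ℝ) : Set E2 := {x | V x < lam}

/-- `B_V^{(-r)}(λ) = {x : B(x,r) ⊆ B_V(λ)}`. -/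
def BVin (V : E2 → ℝ) (r lam : ℝ) : Set E2 := {x | Metric.ball x r ⊆ BV V lam}

/-- The Bessel function of order `0`. -/
noncomputable def besselJ0 (x : ℝ) : ℝ :=
  (1 / π) * ∫ t in (0 : ℝ)..π, Real.cos (x * Real.sin t)

/-- `j_{0,1}`, the smallest positive zero of the Bessel function `J₀`. -/
noncomputable def j01 : ℝ := sInf {x : ℝ | 0 < x ∧ besselJ0 x = 0}

set_option maxHeartbeats 1000000

lemma hasDerivAt_integral_param {f f' : ℝ → ℝ → ℝ} {a b x₀ ε C : ℝ} (hε : 0 < ε)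
    (hf : ∀ x, Continuous fun t => f x t)
    (hf'c : Continuous fun t => f' x₀ t)
    (hb : ∀ x ∈ Metric.ball x₀ ε, ∀ t, |f' x t| ≤ C)
    (hd : ∀ x t, HasDerivAt (fun y => f y t) (f' x t) x) :
    HasDerivAt (fun x => ∫ t in a..b, f x t) (∫ t in a..b, f' x₀ t) x₀ := by
  have := (intervalIntegral.hasDerivAt_integral_of_dominated_loc_of_deriv_le
    (μ := volume) (a := a) (b := b) (F := f) (F' := f') (bound := fun _ => C) (Metric.ball_mem_nhds x₀ hε)
    (Filter.Eventually.of_forall fun x => (hf x).aestronglyMeasurable)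
    ((hf x₀).intervalIntegrable a b)
    hf'c.aestronglyMeasurable
    (Filter.Eventually.of_forall fun t _ x hx => by
      rw [Real.norm_eq_abs]; exact hb x hx t)
    (intervalIntegrable_const)
    (Filter.Eventually.of_forall fun t _ x _ => hd x t))
  exact this.2

noncomputable def bJ (x : ℝ) : ℝ := ∫ t in (0:ℝ)..π, Real.cos (x * Real.sin t)
noncomputable def bJ' (x : ℝ) : ℝ := ∫ t in (0:ℝ)..π, -(Real.sin (x * Real.sin t) * Real.sin t)
noncomputable def bJ'' (x : ℝ) : ℝ := ∫ t in (0:ℝ)..π, -(Real.cos (x * Real.sin t) * Real.sin t * Real.sin t)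

lemma hasDerivAt_bJ (x : ℝ) : HasDerivAt bJ (bJ' x) x := by
  unfold bJ bJ'
  apply hasDerivAt_integral_param (f := fun x t => Real.cos (x * Real.sin t))
    (f' := fun x t => -(Real.sin (x * Real.sin t) * Real.sin t)) (ε := 1) (C := 1) one_pos
  · intro y; fun_prop
  · fun_prop
  · intro y _ t
    calc |(-(Real.sin (y * Real.sin t) * Real.sin t))| = |Real.sin (y * Real.sin t)| * |Real.sin t| := by
          rw [abs_neg, abs_mul]
      _ ≤ 1 * 1 := mul_le_mul (Real.abs_sin_le_one _) (Real.abs_sin_le_one _) (abs_nonneg _) zero_le_one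
      _ = 1 := by norm_num
  · intro y t
    have h := ((hasDerivAt_id y).mul_const (Real.sin t)).cos
    simpa using h

lemma hasDerivAt_bJ' (x : ℝ) : HasDerivAt bJ' (bJ'' x) x := by
  unfold bJ' bJ''
  apply hasDerivAt_integral_param (f := fun x t => -(Real.sin (x * Real.sin t) * Real.sin t))
    (f' := fun x t => -(Real.cos (x * Real.sin t) * Real.sin t * Real.sin t)) (ε := 1) (C := 1) one_pos
  · intro y; fun_prop
  · fun_prop
  · intro y _ t
    have h1 : |Real.cos (y * Real.sin t)| ≤ 1 := Real.abs_cos_le_one _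
    have h2 : |Real.sin t| ≤ 1 := Real.abs_sin_le_one _
    calc |(-(Real.cos (y * Real.sin t) * Real.sin t * Real.sin t))|
        = |Real.cos (y * Real.sin t)| * |Real.sin t| * |Real.sin t| := by
          rw [abs_neg, abs_mul, abs_mul]
      _ ≤ 1 * 1 * 1 := by
          gcongr
      _ = 1 := by norm_num
  · intro y t
    have h := (((hasDerivAt_id y).mul_const (Real.sin t)).sin.mul_const (Real.sin t)).neg
    simp only [id_eq, one_mul] at h
    exact h

lemma bJ_ode (x : ℝ) : x * bJ'' x + bJ' x + x * bJ x = 0 := by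
  have hint : ∀ g : ℝ → ℝ, Continuous g → IntervalIntegrable g volume 0 π := fun g hg =>
    hg.intervalIntegrable 0 π
  have key : ∀ t ∈ uIcc (0:ℝ) π,
      HasDerivAt (fun s => Real.cos s * Real.sin (x * Real.sin s))
        (x * -(Real.cos (x * Real.sin t) * Real.sin t * Real.sin t)
          + -(Real.sin (x * Real.sin t) * Real.sin t) + x * Real.cos (x * Real.sin t)) t := by
    intro t _
    have h := (Real.hasDerivAt_cos t).mul (((Real.hasDerivAt_sin t).const_mul x).sin)
    refine h.congr_deriv ?_
    have h2 := Real.sin_sq_add_cos_sq t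
    linear_combination (x * Real.cos (x * Real.sin t)) * h2
  have hFTC := intervalIntegral.integral_eq_sub_of_hasDerivAt key (hint _ (by fun_prop))
  have hsplit : (∫ t in (0:ℝ)..π,
      (x * -(Real.cos (x * Real.sin t) * Real.sin t * Real.sin t)
        + -(Real.sin (x * Real.sin t) * Real.sin t) + x * Real.cos (x * Real.sin t)))
      = x * bJ'' x + bJ' x + x * bJ x := by
    rw [intervalIntegral.integral_add, intervalIntegral.integral_add,
      intervalIntegral.integral_const_mul, intervalIntegral.integral_const_mul]
    · rfl
    · exact hint _ (by fun_prop)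
    · exact hint _ (by fun_prop)
    · exact hint _ (by fun_prop)
    · exact hint _ (by fun_prop)
  rw [hsplit] at hFTC
  simp [Real.sin_pi, Real.cos_pi] at hFTC
  linarith [hFTC]

noncomputable def J0d (x : ℝ) : ℝ := (1/π) * bJ' x
noncomputable def J0dd (x : ℝ) : ℝ := (1/π) * bJ'' x

lemma hasDerivAt_besselJ0 (x : ℝ) : HasDerivAt besselJ0 (J0d x) x :=
  (hasDerivAt_bJ x).const_mul (1/π)

lemma hasDerivAt_J0d (x : ℝ) : HasDerivAt J0d (J0dd x) x :=
  (hasDerivAt_bJ' x).const_mul (1/π)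

lemma besselJ0_ode (x : ℝ) : x * J0dd x + J0d x + x * besselJ0 x = 0 := by
  have h := bJ_ode x
  have hb : besselJ0 x = (1/π) * bJ x := rfl
  rw [hb]; unfold J0d J0dd
  linear_combination (1/π) * h

lemma continuous_besselJ0 : Continuous besselJ0 :=
  Differentiable.continuous fun x => (hasDerivAt_besselJ0 x).differentiableAt

attribute [fun_prop] continuous_besselJ0

lemma besselJ0_zero : besselJ0 0 = 1 := by
  unfold besselJ0
  simp [Real.pi_ne_zero]

lemma exists_besselJ0_zero : ∃ x : ℝ, 0 < x ∧ besselJ0 x = 0 := by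
  by_contra hno
  push_neg at hno
  have hpos : ∀ x : ℝ, 0 ≤ x → 0 < besselJ0 x := by
    intro x hx
    rcases hx.eq_or_lt with rfl | hx'
    · rw [besselJ0_zero]; norm_num
    by_contra hnp
    push_neg at hnp
    have h0 : (0:ℝ) ∈ Icc (besselJ0 x) (besselJ0 0) := ⟨hnp, by rw [besselJ0_zero]; norm_num⟩
    obtain ⟨c, hc, hfc⟩ := intermediate_value_Icc' hx'.le continuous_besselJ0.continuousOn h0
    have hc0 : c ≠ 0 := by
      intro h; rw [h, besselJ0_zero] at hfc; norm_num at hfc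
    exact hno c (lt_of_le_of_ne hc.1 (Ne.symm hc0)) hfc
  -- z = sqrt x * J0 x
  set z : ℝ → ℝ := fun x => Real.sqrt x * besselJ0 x with hz_def
  set z1 : ℝ → ℝ := fun x => 1 / (2 * Real.sqrt x) * besselJ0 x + Real.sqrt x * J0d x with hz1_def
  have hz : ∀ x : ℝ, 0 < x → HasDerivAt z (z1 x) x := by
    intro x hx
    exact (Real.hasDerivAt_sqrt hx.ne').mul (hasDerivAt_besselJ0 x)
  have hz1 : ∀ x : ℝ, 0 < x → HasDerivAt z1
      ((-(2 * (1 / (2 * Real.sqrt x))) / (2 * Real.sqrt x) ^ 2) * besselJ0 x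
        + 1 / (2 * Real.sqrt x) * J0d x
        + (1 / (2 * Real.sqrt x) * J0d x + Real.sqrt x * J0dd x)) x := by
    intro x hx
    have hs : Real.sqrt x ≠ 0 := (Real.sqrt_pos.mpr hx).ne'
    have h1 : HasDerivAt (fun y => 2 * Real.sqrt y) (2 * (1 / (2 * Real.sqrt x))) x :=
      (Real.hasDerivAt_sqrt hx.ne').const_mul 2
    have h2 : HasDerivAt (fun y => 1 / (2 * Real.sqrt y))
        (-(2 * (1 / (2 * Real.sqrt x))) / (2 * Real.sqrt x) ^ 2) x := by
      have e : (fun y => 1 / (2 * Real.sqrt y)) = (fun y => 2 * Real.sqrt y)⁻¹ := by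
        funext y; simp [one_div]
      rw [e]; exact h1.inv (by positivity)
    exact (h2.mul (hasDerivAt_besselJ0 x)).add ((Real.hasDerivAt_sqrt hx.ne').mul (hasDerivAt_J0d x))
  -- the key identity: z1' = -(1 + 1/(4x^2)) z
  have hkey : ∀ x : ℝ, 0 < x →
      ((-(2 * (1 / (2 * Real.sqrt x))) / (2 * Real.sqrt x) ^ 2) * besselJ0 x
        + 1 / (2 * Real.sqrt x) * J0d x
        + (1 / (2 * Real.sqrt x) * J0d x + Real.sqrt x * J0dd x))
      = -z x - z x / (4 * x ^ 2) := by
    intro x hx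
    obtain ⟨s, hs, rfl⟩ : ∃ s : ℝ, 0 < s ∧ s ^ 2 = x :=
      ⟨Real.sqrt x, Real.sqrt_pos.mpr hx, Real.sq_sqrt hx.le⟩
    have hs' : Real.sqrt (s ^ 2) = s := by
      rw [Real.sqrt_sq hs.le]
    have hode := besselJ0_ode (s ^ 2)
    simp only [hz_def, hs']
    have hsne : s ≠ 0 := hs.ne'
    field_simp
    linear_combination (16 * s ^ 2) * hode
  -- Wronskian with sin(t-1) on [1, 1+π]
  set W : ℝ → ℝ := fun t => z1 t * Real.sin (t - 1) - z t * Real.cos (t - 1) with hW_def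
  have hWd : ∀ t : ℝ, 0 < t →
      HasDerivAt W (-(z t / (4 * t ^ 2)) * Real.sin (t - 1)) t := by
    intro t ht
    have hsin : HasDerivAt (fun s : ℝ => Real.sin (s - 1)) (Real.cos (t - 1)) t := by
      simpa using ((hasDerivAt_id t).sub_const 1).sin
    have hcos : HasDerivAt (fun s : ℝ => Real.cos (s - 1)) (-Real.sin (t - 1)) t := by
      simpa using ((hasDerivAt_id t).sub_const 1).cos
    have h := (((hz1 t ht).congr_deriv (hkey t ht)).mul hsin).sub ((hz t ht).mul hcos)
    refine h.congr_deriv ?_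
    ring
  have hanti : AntitoneOn W (Icc 1 (1 + π)) := by
    apply antitoneOn_of_deriv_nonpos (convex_Icc _ _)
    · intro t ht
      exact ((hWd t (by linarith [ht.1])).differentiableAt.continuousAt).continuousWithinAt
    · intro t ht
      rw [interior_Icc] at ht
      exact (hWd t (by linarith [ht.1])).differentiableAt.differentiableWithinAt
    · intro t ht
      rw [interior_Icc] at ht
      rw [(hWd t (by linarith [ht.1])).deriv]
      have h1 : 0 ≤ z t := by
        have := hpos t (by linarith [ht.1])
        have : 0 < z t := mul_pos (Real.sqrt_pos.mpr (by linarith [ht.1])) this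
        linarith
      have h2 : 0 ≤ Real.sin (t - 1) :=
        Real.sin_nonneg_of_nonneg_of_le_pi (by linarith [ht.1]) (by linarith [ht.2])
      have h3 : 0 ≤ z t / (4 * t ^ 2) := by positivity
      nlinarith
  have hW1 : W 1 < 0 := by
    have : z 1 > 0 := mul_pos (by simp [Real.sqrt_one]) (hpos 1 zero_le_one)
    simp only [hW_def]
    norm_num
    linarith
  have hWpi : 0 < W (1 + π) := by
    have hzpos : 0 < z (1 + π) :=
      mul_pos (Real.sqrt_pos.mpr (by positivity)) (hpos (1 + π) (by positivity))
    simp only [hW_def]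
    have h1 : (1:ℝ) + π - 1 = π := by ring
    rw [h1, Real.sin_pi, Real.cos_pi]
    linarith
  have := hanti (left_mem_Icc.mpr (by linarith [Real.pi_pos])) 
    (right_mem_Icc.mpr (by linarith [Real.pi_pos])) (by linarith [Real.pi_pos])
  linarith

lemma j01_spec : 0 < j01 ∧ besselJ0 j01 = 0 := by
  obtain ⟨x₀, hx₀, hfx₀⟩ := exists_besselJ0_zero
  have hSne : {x : ℝ | 0 < x ∧ besselJ0 x = 0}.Nonempty := ⟨x₀, hx₀, hfx₀⟩
  -- find ε > 0 with J0 > 0 on ball 0 ε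
  have hopen : IsOpen {y : ℝ | 0 < besselJ0 y} := isOpen_lt continuous_const continuous_besselJ0
  have h0mem : (0:ℝ) ∈ {y : ℝ | 0 < besselJ0 y} := by
    simp [besselJ0_zero]
  obtain ⟨ε, hε, hball⟩ := Metric.isOpen_iff.mp hopen 0 h0mem
  have hlb : ∀ s ∈ {x : ℝ | 0 < x ∧ besselJ0 x = 0}, ε ≤ s := by
    intro s hs
    by_contra hlt
    push_neg at hlt
    have : s ∈ Metric.ball (0:ℝ) ε := by
      simp [Real.dist_eq, abs_of_pos hs.1]; linarith
    have := hball this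
    simp only [mem_setOf_eq] at this
    linarith [hs.2 ▸ this]
  have hSeq : {x : ℝ | 0 < x ∧ besselJ0 x = 0} = {x : ℝ | ε ≤ x ∧ besselJ0 x = 0} := by
    ext s
    constructor
    · intro hs; exact ⟨hlb s hs, hs.2⟩
    · intro hs; exact ⟨lt_of_lt_of_le hε hs.1, hs.2⟩
  have hclosed : IsClosed {x : ℝ | ε ≤ x ∧ besselJ0 x = 0} := by
    have : {x : ℝ | ε ≤ x ∧ besselJ0 x = 0} = Ici ε ∩ besselJ0 ⁻¹' {0} := by
      ext s
      simp [mem_setOf_eq]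
    rw [this]
    exact isClosed_Ici.inter (isClosed_singleton.preimage continuous_besselJ0)
  have hbdd : BddBelow {x : ℝ | 0 < x ∧ besselJ0 x = 0} := ⟨0, fun s hs => hs.1.le⟩
  have hmem : j01 ∈ {x : ℝ | 0 < x ∧ besselJ0 x = 0} := by
    unfold j01
    rw [hSeq]
    rw [hSeq] at hSne hbdd
    exact hclosed.csInf_mem hSne hbdd
  exact hmem

lemma j01_pos : 0 < j01 := j01_spec.1
lemma besselJ0_j01 : besselJ0 j01 = 0 := j01_spec.2

lemma j01_le {s : ℝ} (hs : 0 < s) (h : besselJ0 s = 0) : j01 ≤ s :=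
  csInf_le ⟨0, fun t ht => ht.1.le⟩ ⟨hs, h⟩

lemma besselJ0_pos_of_lt {y : ℝ} (h0 : 0 ≤ y) (hy : y < j01) : 0 < besselJ0 y := by
  by_contra hnp
  push_neg at hnp
  rcases h0.eq_or_lt with rfl | h0'
  · rw [besselJ0_zero] at hnp; norm_num at hnp
  rcases hnp.eq_or_lt with heq | hlt
  · exact absurd (j01_le h0' heq) (not_le.mpr hy)
  · have h0i : (0:ℝ) ∈ Icc (besselJ0 y) (besselJ0 0) := ⟨hlt.le, by rw [besselJ0_zero]; norm_num⟩
    obtain ⟨c, hc, hfc⟩ := intermediate_value_Icc' h0 continuous_besselJ0.continuousOn h0i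
    have hc0 : 0 < c := by
      rcases hc.1.eq_or_lt with rfl | h
      · rw [besselJ0_zero] at hfc; norm_num at hfc
      · exact h
    have h1 : j01 ≤ c := j01_le hc0 hfc
    have h2 : c ≤ y := hc.2
    linarith

lemma besselJ0_nonneg {y : ℝ} (h0 : 0 ≤ y) (hy : y ≤ j01) : 0 ≤ besselJ0 y := by
  rcases hy.eq_or_lt with rfl | h
  · rw [besselJ0_j01]
  · exact (besselJ0_pos_of_lt h0 h).le

lemma J0d_j01_neg : J0d j01 < 0 := by
  have key : ∀ t ∈ uIcc (0:ℝ) j01, HasDerivAt (fun x => x * J0d x) (-(t * besselJ0 t)) t := by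
    intro t _
    have h := (hasDerivAt_id t).mul (hasDerivAt_J0d t)
    have he : 1 * J0d t + id t * J0dd t = -(t * besselJ0 t) := by
      have := besselJ0_ode t
      simp only [id_eq, one_mul]
      linarith
    rw [he] at h
    exact h
  have hFTC := intervalIntegral.integral_eq_sub_of_hasDerivAt key
    ((by fun_prop : Continuous fun t : ℝ => -(t * besselJ0 t)).intervalIntegrable 0 j01)
  have hposint : 0 < ∫ t in (0:ℝ)..j01, t * besselJ0 t := by
    apply intervalIntegral.intervalIntegral_pos_of_pos_on
    · exact (by fun_prop : Continuous fun t : ℝ => t * besselJ0 t).intervalIntegrable 0 j01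
    · intro t ht
      exact mul_pos ht.1 (besselJ0_pos_of_lt ht.1.le ht.2)
    · exact j01_pos
  have hneg : (∫ t in (0:ℝ)..j01, -(t * besselJ0 t)) = -(∫ t in (0:ℝ)..j01, t * besselJ0 t) :=
    intervalIntegral.integral_neg
  rw [hneg] at hFTC
  simp only [zero_mul, sub_zero] at hFTC
  have : j01 * J0d j01 < 0 := by rw [← hFTC]; linarith
  by_contra hge
  push_neg at hge
  nlinarith [j01_pos]

noncomputable def Ee (i : Fin 2) : E2 := EuclideanSpace.single i (1:ℝ)
noncomputable def om (θ : ℝ) : E2 := Real.cos θ • Ee 0 + Real.sin θ • Ee 1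
noncomputable def omp (θ : ℝ) : E2 := -Real.sin θ • Ee 0 + Real.cos θ • Ee 1

lemma continuous_om : Continuous om := by unfold om; fun_prop
lemma continuous_omp : Continuous omp := by unfold omp; fun_prop

lemma norm_om (θ : ℝ) : ‖om θ‖ = 1 := by
  have h : ∀ i : Fin 2, om θ i = ![Real.cos θ, Real.sin θ] i := by
    intro i
    fin_cases i <;>
      simp [om, Ee, EuclideanSpace.single_apply]
  rw [EuclideanSpace.norm_eq]
  rw [Fin.sum_univ_two, h 0, h 1]
  simp [sq_abs]

lemma hasDerivAt_om (θ : ℝ) : HasDerivAt om (omp θ) θ := by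
  unfold om omp
  exact ((Real.hasDerivAt_cos θ).smul_const (Ee 0)).add ((Real.hasDerivAt_sin θ).smul_const (Ee 1))

lemma hasDerivAt_omp (θ : ℝ) : HasDerivAt omp (-om θ) θ := by
  have h := (((Real.hasDerivAt_sin θ).neg).smul_const (Ee 0)).add
    (((Real.hasDerivAt_cos θ).smul_const (Ee 1)))
  refine h.congr_deriv ?_
  unfold om
  module

lemma om_per : om (2*π) = om 0 := by unfold om; simp
lemma omp_per : omp (2*π) = omp 0 := by unfold omp; simp

section deriv_lemmas
variable {u : E2 → ℝ}

lemma hasDerivAt_line (y v : E2) (t : ℝ) : HasDerivAt (fun s : ℝ => y + s • v) v t := by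
  simpa using ((hasDerivAt_id t).smul_const v).const_add y

lemma hasDerivAt_comp_line (hu2 : ContDiff ℝ 2 u) (y v : E2) (t : ℝ) :
    HasDerivAt (fun s : ℝ => u (y + s • v)) (fderiv ℝ u (y + t • v) v) t :=
  ((hu2.differentiable (by norm_num)) (y + t • v)).hasFDerivAt.comp_hasDerivAt t
    (hasDerivAt_line y v t)

lemma hasDerivAt_fderiv_line (hu2 : ContDiff ℝ 2 u) (y v w : E2) (t : ℝ) :
    HasDerivAt (fun s : ℝ => fderiv ℝ u (y + s • v) w)
      (fderiv ℝ (fderiv ℝ u) (y + t • v) v w) t := by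
  have hF1 : ContDiff ℝ 1 (fderiv ℝ u) := hu2.fderiv_right (by norm_num)
  have h1 : HasDerivAt (fun s : ℝ => fderiv ℝ u (y + s • v))
      (fderiv ℝ (fderiv ℝ u) (y + t • v) v) t :=
    ((hF1.differentiable one_ne_zero) (y + t • v)).hasFDerivAt.comp_hasDerivAt t (hasDerivAt_line y v t)
  simpa using h1.clm_apply (hasDerivAt_const t w)

lemma lap_eq_fderiv2 (hu2 : ContDiff ℝ 2 u) (y : E2) :
    lap u y = fderiv ℝ (fderiv ℝ u) y (Ee 0) (Ee 0) + fderiv ℝ (fderiv ℝ u) y (Ee 1) (Ee 1) := by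
  have key : ∀ v : E2, iteratedDeriv 2 (fun t : ℝ => u (y + t • v)) 0
      = fderiv ℝ (fderiv ℝ u) y v v := by
    intro v
    rw [iteratedDeriv_succ, iteratedDeriv_one]
    have hd : deriv (fun t : ℝ => u (y + t • v)) = fun t => fderiv ℝ u (y + t • v) v :=
      funext fun t => (hasDerivAt_comp_line hu2 y v t).deriv
    rw [hd]
    have h := (hasDerivAt_fderiv_line hu2 y v v 0).deriv
    simpa using h
  unfold lap Ee
  rw [Fin.sum_univ_two, key, key]

lemma trace_om (B : E2 →L[ℝ] E2 →L[ℝ] ℝ) (θ : ℝ) :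
    B (om θ) (om θ) + B (omp θ) (omp θ) = B (Ee 0) (Ee 0) + B (Ee 1) (Ee 1) := by
  simp only [om, omp, map_add, _root_.map_smul, map_neg, ContinuousLinearMap.add_apply,
    ContinuousLinearMap.smul_apply, ContinuousLinearMap.coe_smul', Pi.smul_apply,
    ContinuousLinearMap.neg_apply, ContinuousLinearMap.coe_add', Pi.add_apply, smul_eq_mul,
    neg_smul, neg_neg, Pi.neg_apply, mul_neg, neg_mul]
  have h := Real.sin_sq_add_cos_sq θ
  linear_combination (B (Ee 0) (Ee 0) + B (Ee 1) (Ee 1)) * h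

end deriv_lemmas

attribute [fun_prop] continuous_om continuous_omp

lemma exists_norm_bound {W : Type*} [NormedAddCommGroup W] {G : E2 → W} (hG : Continuous G)
    (x : E2) (R : ℝ) : ∃ C : ℝ, ∀ y ∈ Metric.closedBall x R, ‖G y‖ ≤ C := by
  by_cases hne : (Metric.closedBall x R).Nonempty
  · obtain ⟨y₀, _, hy₀⟩ := (isCompact_closedBall x R).exists_isMaxOn hne hG.norm.continuousOn
    exact ⟨‖G y₀‖, fun y hy => hy₀ hy⟩
  · exact ⟨0, fun y hy => absurd ⟨y, hy⟩ hne⟩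

lemma no_pos_ball (V u : E2 → ℝ) (hVcont : Continuous V) (hu2 : ContDiff ℝ 2 u)
    (lam : ℝ) (heq : ∀ y, lap u y = (V y - lam) * u y)
    (x : E2) (k s₁ : ℝ) (hk : 0 < k) (hks₁ : k * s₁ = j01)
    (hupos : ∀ p ∈ Metric.closedBall x s₁, 0 < u p)
    (hVle : ∀ p ∈ Metric.closedBall x s₁, V p ≤ lam - k^2) : False := by
  have hs₁ : 0 < s₁ := by nlinarith [j01_pos, hks₁, hk.le]
  set F1 := fderiv ℝ u with hF1_def
  set F2 := fderiv ℝ (fderiv ℝ u) with hF2_def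
  have hucont : Continuous u := hu2.continuous
  have hF1cd : ContDiff ℝ 1 F1 := hu2.fderiv_right (by norm_num)
  have hF1c : Continuous F1 := hu2.continuous_fderiv (by norm_num)
  have hF2c : Continuous F2 := hF1cd.continuous_fderiv one_ne_zero
  set γ : ℝ → ℝ → E2 := fun s θ => x + s • om θ with hγ_def
  have hγmem : ∀ s θ, γ s θ ∈ Metric.closedBall x |s| := by
    intro s θ
    rw [Metric.mem_closedBall, dist_eq_norm]
    simp [hγ_def, norm_smul, norm_om]
  have hγcont : ∀ s, Continuous fun θ => γ s θ := by
    intro s; unfold γ; fun_prop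
  have hγcont' : ∀ θ, Continuous fun s => γ s θ := by
    intro θ; unfold γ; fun_prop
  have hInt : ∀ g : ℝ → ℝ, Continuous g → IntervalIntegrable g volume 0 (2*π) := fun g hg =>
    hg.intervalIntegrable 0 (2*π)
  have hVγ : ∀ s : ℝ, Continuous fun θ => V (γ s θ) := fun s => hVcont.comp (hγcont s)
  have huγ : ∀ s : ℝ, Continuous fun θ => u (γ s θ) := fun s => hucont.comp (hγcont s)
  have hVuγ : ∀ s : ℝ, Continuous fun θ => (V (γ s θ) - lam) * u (γ s θ) := fun s =>
    Continuous.mul (Continuous.sub (hVγ s) continuous_const) (huγ s)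
  set m : ℝ → ℝ := fun s => ∫ θ in (0:ℝ)..(2*π), u (γ s θ) with hm_def
  set n : ℝ → ℝ := fun s => ∫ θ in (0:ℝ)..(2*π), F1 (γ s θ) (om θ) with hn_def
  set p : ℝ → ℝ := fun s => ∫ θ in (0:ℝ)..(2*π), F2 (γ s θ) (om θ) (om θ) with hp_def
  set q : ℝ → ℝ := fun s => ∫ θ in (0:ℝ)..(2*π), (V (γ s θ) - lam) * u (γ s θ) with hq_def
  -- derivative of m
  have hm : ∀ s₀ : ℝ, HasDerivAt m (n s₀) s₀ := by
    intro s₀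
    obtain ⟨C, hC⟩ := exists_norm_bound hF1c x (|s₀| + 1)
    apply hasDerivAt_integral_param (f := fun s θ => u (γ s θ))
      (f' := fun s θ => F1 (γ s θ) (om θ)) (ε := 1) (C := C) one_pos
    · intro s; exact hucont.comp (hγcont s)
    · exact (hF1c.comp (hγcont s₀)).clm_apply continuous_om
    · intro s hs θ
      have hmem : γ s θ ∈ Metric.closedBall x (|s₀| + 1) := by
        apply Metric.closedBall_subset_closedBall _ (hγmem s θ)
        have := abs_sub_abs_le_abs_sub s s₀
        rw [Metric.mem_ball, Real.dist_eq] at hs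
        linarith
      calc |F1 (γ s θ) (om θ)| = ‖F1 (γ s θ) (om θ)‖ := (Real.norm_eq_abs _).symm
        _ ≤ ‖F1 (γ s θ)‖ * ‖om θ‖ := (F1 (γ s θ)).le_opNorm _
        _ = ‖F1 (γ s θ)‖ := by rw [norm_om, mul_one]
        _ ≤ C := hC _ hmem
    · intro s θ
      exact hasDerivAt_comp_line hu2 x (om θ) s
  -- derivative of n
  have hn : ∀ s₀ : ℝ, HasDerivAt n (p s₀) s₀ := by
    intro s₀
    obtain ⟨C, hC⟩ := exists_norm_bound (W := E2 →L[ℝ] E2 →L[ℝ] ℝ) hF2c x (|s₀| + 1)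
    apply hasDerivAt_integral_param (f := fun s θ => F1 (γ s θ) (om θ))
      (f' := fun s θ => F2 (γ s θ) (om θ) (om θ)) (ε := 1) (C := C) one_pos
    · intro s; exact (hF1c.comp (hγcont s)).clm_apply continuous_om
    · exact ((hF2c.comp (hγcont s₀)).clm_apply continuous_om).clm_apply continuous_om
    · intro s hs θ
      have hmem : γ s θ ∈ Metric.closedBall x (|s₀| + 1) := by
        apply Metric.closedBall_subset_closedBall _ (hγmem s θ)
        have := abs_sub_abs_le_abs_sub s s₀
        rw [Metric.mem_ball, Real.dist_eq] at hs
        linarith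
      calc |F2 (γ s θ) (om θ) (om θ)| = ‖F2 (γ s θ) (om θ) (om θ)‖ := (Real.norm_eq_abs _).symm
        _ ≤ ‖F2 (γ s θ) (om θ)‖ * ‖om θ‖ := (F2 (γ s θ) (om θ)).le_opNorm _
        _ ≤ ‖F2 (γ s θ)‖ * ‖om θ‖ * ‖om θ‖ :=
            mul_le_mul_of_nonneg_right ((F2 (γ s θ)).le_opNorm _) (norm_nonneg _)
        _ = ‖F2 (γ s θ)‖ := by rw [norm_om]; ring
        _ ≤ C := hC _ hmem
    · intro s θ
      exact hasDerivAt_fderiv_line hu2 x (om θ) (om θ) s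
  -- angular identity
  have hang : ∀ s : ℝ,
      s^2 * (∫ θ in (0:ℝ)..(2*π), F2 (γ s θ) (omp θ) (omp θ)) = s * n s := by
    intro s
    have hγθ : ∀ θ : ℝ, HasDerivAt (fun θ => γ s θ) (s • omp θ) θ := fun θ =>
      ((hasDerivAt_om θ).const_smul s).const_add x
    have hψd : ∀ θ : ℝ, HasDerivAt (fun θ => F1 (γ s θ) (s • omp θ))
        (F2 (γ s θ) (s • omp θ) (s • omp θ) + F1 (γ s θ) (s • -om θ)) θ := by
      intro θ
      have h1 : HasDerivAt (fun θ => F1 (γ s θ)) (F2 (γ s θ) (s • omp θ)) θ :=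
        ((hF1cd.differentiable one_ne_zero) _).hasFDerivAt.comp_hasDerivAt θ (hγθ θ)
      have h2 : HasDerivAt (fun θ => s • omp θ) (s • -om θ) θ :=
        (hasDerivAt_omp θ).const_smul s
      exact h1.clm_apply h2
    have hcont : Continuous fun θ =>
        F2 (γ s θ) (s • omp θ) (s • omp θ) + F1 (γ s θ) (s • -om θ) := by
      apply Continuous.add
      · exact (((hF2c.comp (hγcont s)).clm_apply (continuous_omp.const_smul s)).clm_apply
          (continuous_omp.const_smul s))
      · exact (hF1c.comp (hγcont s)).clm_apply ((continuous_om.neg).const_smul s)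
    have hFTC := intervalIntegral.integral_eq_sub_of_hasDerivAt
      (f := fun θ => F1 (γ s θ) (s • omp θ))
      (f' := fun θ => F2 (γ s θ) (s • omp θ) (s • omp θ) + F1 (γ s θ) (s • -om θ))
      (fun θ _ => hψd θ) (hInt _ hcont)
    have hper : F1 (γ s (2*π)) (s • omp (2*π)) = F1 (γ s 0) (s • omp 0) := by
      rw [show γ s (2*π) = γ s 0 from by simp [hγ_def, om_per], omp_per]
    have hFTC' : (∫ θ in (0:ℝ)..(2*π),
        (F2 (γ s θ) (s • omp θ) (s • omp θ) + F1 (γ s θ) (s • -om θ)))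
        = F1 (γ s (2*π)) (s • omp (2*π)) - F1 (γ s 0) (s • omp 0) := hFTC
    rw [hper, sub_self] at hFTC'
    have hsplit : (∫ θ in (0:ℝ)..(2*π),
        (F2 (γ s θ) (s • omp θ) (s • omp θ) + F1 (γ s θ) (s • -om θ)))
        = s^2 * (∫ θ in (0:ℝ)..(2*π), F2 (γ s θ) (omp θ) (omp θ)) - s * n s := by
      have hcg : ∀ θ : ℝ, F2 (γ s θ) (s • omp θ) (s • omp θ) + F1 (γ s θ) (s • -om θ)
          = s^2 * (F2 (γ s θ) (omp θ) (omp θ)) + (-(s * (F1 (γ s θ) (om θ)))) := by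
        intro θ
        rw [(F2 (γ s θ)).map_smul, (F1 (γ s θ)).map_smul]
        simp [smul_eq_mul]
        ring
      have hI1 : Continuous fun θ => F2 (γ s θ) (omp θ) (omp θ) :=
        ((hF2c.comp (hγcont s)).clm_apply continuous_omp).clm_apply continuous_omp
      have hI2 : Continuous fun θ => F1 (γ s θ) (om θ) :=
        (hF1c.comp (hγcont s)).clm_apply continuous_om
      rw [intervalIntegral.integral_congr (fun θ _ => hcg θ)]
      rw [intervalIntegral.integral_add (hInt (fun θ => s^2 * F2 (γ s θ) (omp θ) (omp θ)) (continuous_const.mul hI1))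
        (hInt (fun θ => -(s * F1 (γ s θ) (om θ))) ((continuous_const.mul hI2).neg)), intervalIntegral.integral_const_mul,
        intervalIntegral.integral_neg, intervalIntegral.integral_const_mul]
      ring
    rw [hsplit] at hFTC'
    linarith
  -- Laplacian identity
  have hlapint : ∀ s : ℝ,
      p s + (∫ θ in (0:ℝ)..(2*π), F2 (γ s θ) (omp θ) (omp θ)) = q s := by
    intro s
    have hcg : ∀ θ : ℝ, F2 (γ s θ) (om θ) (om θ) + F2 (γ s θ) (omp θ) (omp θ)
        = (V (γ s θ) - lam) * u (γ s θ) := by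
      intro θ
      rw [trace_om (F2 (γ s θ)) θ]
      rw [← lap_eq_fderiv2 hu2 (γ s θ)]
      exact heq _
    have := intervalIntegral.integral_congr (μ := volume) (a := (0:ℝ)) (b := 2*π) (fun θ _ => hcg θ)
    rw [intervalIntegral.integral_add] at this
    · exact this
    · exact hInt _ (((hF2c.comp (hγcont s)).clm_apply continuous_om).clm_apply continuous_om)
    · exact hInt _ (((hF2c.comp (hγcont s)).clm_apply continuous_omp).clm_apply continuous_omp)

  have hkey : ∀ s : ℝ, s ≠ 0 → n s + s * p s = s * q s := by
    intro s hs
    have h1 := hlapint s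
    have h2 := hang s
    have h3 : s * (∫ θ in (0:ℝ)..(2*π), F2 (γ s θ) (omp θ) (omp θ)) = n s := by
      apply mul_left_cancel₀ hs
      rw [← mul_assoc, show s * s = s^2 from (sq s).symm]
      exact h2
    have h4 : s * p s + s * (∫ θ in (0:ℝ)..(2*π), F2 (γ s θ) (omp θ) (omp θ)) = s * q s := by
      rw [← mul_add, h1]
    linarith
  -- the comparison function W
  set W : ℝ → ℝ := fun s => (s * n s) * besselJ0 (k*s) - m s * (s * k * J0d (k*s)) with hW_def
  have hWd : ∀ s : ℝ, HasDerivAt W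
      ((n s + s * p s) * besselJ0 (k*s) + (s * n s) * (k * J0d (k*s))
        - (n s * (s * k * J0d (k*s)) + m s * (k * J0d (k*s) + s * k * (k * J0dd (k*s))))) s := by
    intro s
    have hksd : HasDerivAt (fun s : ℝ => k * s) k s := by
      simpa using (hasDerivAt_id s).const_mul k
    have hA : HasDerivAt (fun s => s * n s) (n s + s * p s) s := by
      have := (hasDerivAt_id s).mul (hn s)
      exact this.congr_deriv (by simp)
    have hB : HasDerivAt (fun s => besselJ0 (k*s)) (k * J0d (k*s)) s := by
      have := (hasDerivAt_besselJ0 (k*s)).comp s hksd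
      exact this.congr_deriv (mul_comm _ _)
    have hBd : HasDerivAt (fun s => J0d (k*s)) (k * J0dd (k*s)) s := by
      have := (hasDerivAt_J0d (k*s)).comp s hksd
      exact this.congr_deriv (mul_comm _ _)
    have hC : HasDerivAt (fun s => s * k * J0d (k*s)) (k * J0d (k*s) + s * k * (k * J0dd (k*s))) s := by
      have := ((hasDerivAt_id s).mul_const k).mul hBd
      exact this.congr_deriv (by simp)
    exact (hA.mul hB).sub ((hm s).mul hC)
  have hanti : AntitoneOn W (Icc 0 s₁) := by
    apply antitoneOn_of_deriv_nonpos (convex_Icc _ _)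
    · exact fun s _ => (hWd s).differentiableAt.continuousAt.continuousWithinAt
    · intro s hs
      rw [interior_Icc] at hs
      exact (hWd s).differentiableAt.differentiableWithinAt
    · intro s hs
      rw [interior_Icc] at hs
      rw [(hWd s).deriv]
      have hk1 := hkey s (ne_of_gt hs.1)
      have hode := besselJ0_ode (k*s)
      have hD : (n s + s * p s) * besselJ0 (k*s) + (s * n s) * (k * J0d (k*s))
          - (n s * (s * k * J0d (k*s)) + m s * (k * J0d (k*s) + s * k * (k * J0dd (k*s))))
          = s * besselJ0 (k*s) * (q s + k^2 * m s) := by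
        linear_combination besselJ0 (k*s) * hk1 - (m s * k) * hode
      rw [hD]
      have hqm : q s + k^2 * m s ≤ 0 := by
        have hcomb : q s + k^2 * m s
            = ∫ θ in (0:ℝ)..(2*π), ((V (γ s θ) - lam) * u (γ s θ) + k^2 * u (γ s θ)) := by
          rw [intervalIntegral.integral_add (hInt _ (hVuγ s)) (hInt (fun θ => k^2 * u (γ s θ)) (continuous_const.mul (huγ s))),
            intervalIntegral.integral_const_mul]
        have hptw : ∀ θ ∈ Icc (0:ℝ) (2*π),
            (V (γ s θ) - lam) * u (γ s θ) + k^2 * u (γ s θ) ≤ 0 := by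
          intro θ _
          have hmem : γ s θ ∈ Metric.closedBall x s₁ := by
            apply Metric.closedBall_subset_closedBall _ (hγmem s θ)
            rw [abs_of_pos hs.1]; exact hs.2.le
          have h1 := hVle _ hmem
          have h2 := hupos _ hmem
          nlinarith
        rw [hcomb]
        have := intervalIntegral.integral_nonneg (μ := volume) (a := (0:ℝ)) (b := 2*π)
          (f := fun θ => -((V (γ s θ) - lam) * u (γ s θ) + k^2 * u (γ s θ)))
          (by positivity) (fun θ hθ => neg_nonneg.mpr (hptw θ hθ))
        rw [intervalIntegral.integral_neg] at this
        linarith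
      have hJ0nn : 0 ≤ besselJ0 (k*s) := by
        apply besselJ0_nonneg (mul_nonneg hk.le hs.1.le)
        rw [← hks₁]
        exact mul_le_mul_of_nonneg_left hs.2.le hk.le
      have h5 : 0 ≤ s * besselJ0 (k*s) := mul_nonneg hs.1.le hJ0nn
      nlinarith [mul_nonneg h5 (neg_nonneg.mpr hqm)]
  have hW0 : W 0 = 0 := by simp [hW_def]
  have hWs₁ : 0 < W s₁ := by
    have hmpos : 0 < m s₁ := by
      apply intervalIntegral.intervalIntegral_pos_of_pos_on
      · exact hInt _ (hucont.comp (hγcont s₁))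
      · intro θ _
        apply hupos
        apply Metric.closedBall_subset_closedBall _ (hγmem s₁ θ)
        rw [abs_of_pos hs₁]
      · positivity
    have : W s₁ = - (m s₁ * (s₁ * k * J0d j01)) := by
      simp only [hW_def, hks₁, besselJ0_j01]
      ring
    rw [this]
    have hneg := mul_neg_of_pos_of_neg (mul_pos hmpos (mul_pos hs₁ hk)) J0d_j01_neg
    nlinarith [hneg]
  have hle := hanti (left_mem_Icc.mpr hs₁.le) (right_mem_Icc.mpr hs₁.le) hs₁.le
  rw [hW0] at hle
  linarith

lemma lap_neg' (u : E2 → ℝ) (y : E2) : lap (fun p => -u p) y = - lap u y := by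
  unfold lap
  rw [← Finset.sum_neg_distrib]
  congr 1
  funext i
  exact iteratedDeriv_neg 2 _ 0


/-- Let `V` be continuous, positive, tending to `+∞` at
infinity, `δ ∈ (0,1)`, `ρ ∈ (0,1]`, and `ρ_δ = j_{0,1}/√(1-δ)`. If
`λ > (ρ_δ/ρ)²` and `(u,λ)` is an eigenpair of `H_V`, then for every
`x ∈ B_V^{(-ρ)}(δλ)` the ball `B(x, ρ_δ/√λ)` meets the nodal set of `u`. -/
theorem ball_meets_nodal_set
    (V : E2 → ℝ) (hVcont : Continuous V) (hVpos : ∀ x, 0 < V x)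
    (hVinf : Filter.Tendsto V (Filter.cocompact E2) Filter.atTop)
    (δ ρ : ℝ) (hδ : δ ∈ Set.Ioo (0 : ℝ) 1) (hρ : ρ ∈ Set.Ioc (0 : ℝ) 1)
    (lam : ℝ) (hlam : (j01 / Real.sqrt (1 - δ) / ρ) ^ 2 < lam)
    (u : E2 → ℝ) (hu : IsEigenpair V u lam) :
    ∀ x ∈ BVin V ρ (δ * lam),
      (Metric.ball x (j01 / Real.sqrt (1 - δ) / Real.sqrt lam) ∩ nodalSetE u).Nonempty := by
  intro x hx
  by_contra hempty
  rw [Set.not_nonempty_iff_eq_empty] at hempty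
  obtain ⟨hδ0, hδ1⟩ := hδ
  obtain ⟨hρ0, hρ1⟩ := hρ
  obtain ⟨hune, hu2, humem, huq⟩ := hu
  have h1δ : 0 < 1 - δ := by linarith
  have hcpos : 0 < j01 / Real.sqrt (1 - δ) := div_pos j01_pos (Real.sqrt_pos.mpr h1δ)
  have hlam0 : 0 < lam := lt_trans (by positivity) hlam
  set r := j01 / Real.sqrt (1 - δ) / Real.sqrt lam with hr_def
  have hrpos : 0 < r := div_pos hcpos (Real.sqrt_pos.mpr hlam0)
  have hrρ : r < ρ := by
    have h1 : j01 / Real.sqrt (1 - δ) / ρ < Real.sqrt lam :=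
      Real.lt_sqrt_of_sq_lt hlam
    rw [hr_def, div_lt_iff₀ (Real.sqrt_pos.mpr hlam0)]
    rw [div_lt_iff₀ hρ0] at h1
    linarith [h1]
  have hne : ∀ pp ∈ Metric.ball x r, u pp ≠ 0 := by
    intro pp hpp h0
    have hmem : pp ∈ Metric.ball x r ∩ nodalSetE u := ⟨hpp, h0⟩
    rw [hempty] at hmem
    exact hmem
  have hVsub : ∀ pp ∈ Metric.closedBall x r, V pp < δ * lam := by
    intro pp hpp
    exact hx (Metric.mem_ball.mpr (lt_of_le_of_lt (Metric.mem_closedBall.mp hpp) hrρ))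
  obtain ⟨y₀, hy₀mem, hy₀max⟩ := (isCompact_closedBall x r).exists_isMaxOn
    ⟨x, Metric.mem_closedBall_self hrpos.le⟩ hVcont.continuousOn
  set M := V y₀ with hM_def
  have hMlt : M < δ * lam := hVsub y₀ hy₀mem
  have hMV : ∀ pp ∈ Metric.closedBall x r, V pp ≤ M := fun pp hpp => hy₀max hpp
  have hlamM : 0 < lam - M := by nlinarith
  set k := Real.sqrt (lam - M) with hk_def
  have hkpos : 0 < k := Real.sqrt_pos.mpr hlamM
  have hk2 : k^2 = lam - M := Real.sq_sqrt hlamM.le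
  set s₁ := j01 / k with hs₁_def
  have hks₁ : k * s₁ = j01 := by
    rw [hs₁_def]; field_simp
  have hs₁r : s₁ < r := by
    have h1 : Real.sqrt (1 - δ) * Real.sqrt lam < k := by
      rw [← Real.sqrt_mul h1δ.le lam, hk_def]
      apply Real.sqrt_lt_sqrt (by positivity)
      nlinarith
    have h3 : r = j01 / (Real.sqrt (1 - δ) * Real.sqrt lam) := by
      rw [hr_def, div_div]
    rw [hs₁_def, h3]
    exact (div_lt_div_iff_of_pos_left j01_pos hkpos (by positivity)).mpr h1
  have heq : ∀ y : E2, lap u y = (V y - lam) * u y := by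
    intro y
    have h := huq y
    linear_combination -h
  have hcst : (∀ pp ∈ Metric.ball x r, 0 < u pp) ∨ (∀ pp ∈ Metric.ball x r, u pp < 0) := by
    by_contra hcon
    push_neg at hcon
    obtain ⟨⟨p1, hp1m, hp1⟩, ⟨p2, hp2m, hp2⟩⟩ := hcon
    have hp1' : u p1 < 0 := lt_of_le_of_ne hp1 (hne p1 hp1m)
    have hp2' : 0 < u p2 := lt_of_le_of_ne hp2 (Ne.symm (hne p2 hp2m))
    have hiv := (convex_ball x r).isPreconnected.intermediate_value hp1m hp2m
      hu2.continuous.continuousOn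
    obtain ⟨z, hz, hz0⟩ := hiv ⟨hp1'.le, hp2'.le⟩
    exact hne z hz hz0
  have hsub1 : Metric.closedBall x s₁ ⊆ Metric.ball x r := Metric.closedBall_subset_ball hs₁r
  have hVle : ∀ pp ∈ Metric.closedBall x s₁, V pp ≤ lam - k^2 := by
    intro pp hpp
    have := hMV pp (Metric.closedBall_subset_closedBall hs₁r.le hpp)
    rw [hk2]
    linarith
  rcases hcst with hpos | hneg
  · exact no_pos_ball V u hVcont hu2 lam heq x k s₁ hkpos hks₁
      (fun pp hpp => hpos pp (hsub1 hpp)) hVle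
  · apply no_pos_ball V (fun pp => -u pp) hVcont hu2.neg lam ?_ x k s₁ hkpos hks₁
      (fun pp hpp => by simpa using (hneg pp (hsub1 hpp))) hVle
    intro y
    rw [lap_neg' u y, heq y]
    ring
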